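/- Correctness of the single-vertex transition test (Algorithm 3.2): for the linear system dx/dt = Ax + Bu with u ranging over all of ℝᵐ, and adjacent hypercubic cells y < y' sharing a face orthogonal to coordinate axis k with lowest common vertex v₀ and cells of side length ε, the transition y → y' is admissible (i.e., there exist a vertex v of the common face and u with the k-th component of Av + Bu strictly positive) if and only if either some entry of row k of B is nonzero, or a_k^T v₀ + a_k⁺ ε > 0, where a_k^T is row k of A and a_k⁺ is the sum of positive off-diagonal entries of row k of A. -/

import Mathlib

/-!
Moving from `v₀` to the face vertex `v₀ + ε·χ_S` changes `(Av)_k` by `ε · ∑_{j ∈ S} a_kj`, which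
over `S ⊆ {1,…,n} \ {k}` is maximal, with value `ε·aₖ⁺`, at the set of positive off-diagonal entries.
The control term `(Bu)_k` ranges over all of `ℝ` when row `k` of `B` is nonzero, and is `0` otherwise.
-/

open Matrix

theorem Finset.isGreatest_sum_subset {ι M : Type*} [AddCommMonoid M] [LinearOrder M]
    [IsOrderedAddMonoid M] (T : Finset ι) (f : ι → M) :
    IsGreatest ((fun S => ∑ j ∈ S, f j) '' {S | S ⊆ T}) (∑ j ∈ T, max (f j) 0) := by
  refine ⟨⟨T.filter (fun j => 0 < f j), Finset.filter_subset _ _, ?_⟩, ?_⟩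
  · dsimp only
    rw [Finset.sum_filter]
    refine Finset.sum_congr rfl fun j _ => ?_
    split_ifs with h
    · exact (max_eq_left h.le).symm
    · exact (max_eq_right (not_lt.1 h)).symm
  · rintro _ ⟨S, hST, rfl⟩
    calc ∑ j ∈ S, f j ≤ ∑ j ∈ S, max (f j) 0 := Finset.sum_le_sum fun j _ => le_max_left _ _
      _ ≤ ∑ j ∈ T, max (f j) 0 :=
        Finset.sum_le_sum_of_subset_of_nonneg hST fun j _ _ => le_max_right _ _

theorem Matrix.mulVec_add_indicator_apply {ι R : Type*} [Fintype ι] [DecidableEq ι]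
    [CommSemiring R] (A : Matrix ι ι R) (v₀ : ι → R) (ε : R) (S : Finset ι) (k : ι) :
    (A *ᵥ (fun i => v₀ i + if i ∈ S then ε else 0)) k = (A *ᵥ v₀) k + (∑ j ∈ S, A k j) * ε := by
  simp [mulVec, dotProduct, mul_add, Finset.sum_add_distrib, Finset.sum_ite_mem, Finset.sum_mul]

theorem Matrix.mulVec_apply_eq_zero_of_row_eq_zero {ι κ R : Type*} [Fintype κ]
    [NonUnitalNonAssocSemiring R] {B : Matrix ι κ R} {k : ι} (hB : ∀ j, B k j = 0) (u : κ → R) :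
    (B *ᵥ u) k = 0 := by
  simp [mulVec, dotProduct, hB]

theorem Matrix.exists_mulVec_apply_eq_of_ne_zero {ι κ K : Type*} [Fintype κ] [DecidableEq κ]
    [Field K] {B : Matrix ι κ K} {k : ι} {j : κ} (hB : B k j ≠ 0) (c : K) :
    ∃ u : κ → K, (B *ᵥ u) k = c :=
  ⟨Pi.single j ((B k j)⁻¹ * c), by simp [mulVec_single, mul_inv_cancel_left₀ hB]⟩

/-- Correctness of the single-vertex transition test (Algorithm 3.2): for
`dx/dt = Ax + Bu` with unconstrained `u ∈ ℝᵐ` and adjacent hypercubic cells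
`y < y'` of side `ε` sharing a face orthogonal to axis `k` with lowest common
vertex `v₀` (the face vertices being `v₀ + ε·χ_S` for `S ⊆ {1,…,n} \ {k}`), the
transition `y → y'` is admissible — i.e. the `k`-th component of `Av + Bu` is
strictly positive for some face vertex `v` and control `u` — iff some entry of row
`k` of `B` is nonzero, or `aₖᵀv₀ + aₖ⁺ε > 0`, where `aₖ⁺` is the sum of the
positive off-diagonal entries of row `k` of `A`. -/
theorem single_vertex_transition_test {n m : ℕ}
    (A : Matrix (Fin n) (Fin n) ℝ) (B : Matrix (Fin n) (Fin m) ℝ)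
    (k : Fin n) (v₀ : Fin n → ℝ) (ε : ℝ) (hε : 0 < ε) :
    (∃ S : Finset (Fin n), k ∉ S ∧ ∃ u : Fin m → ℝ,
        0 < (A *ᵥ (fun i => v₀ i + if i ∈ S then ε else 0) + B *ᵥ u) k) ↔
      ((∃ j, B k j ≠ 0) ∨
        0 < (A *ᵥ v₀) k + (∑ j ∈ Finset.univ.erase k, max (A k j) 0) * ε) := by
  simp_rw [Pi.add_apply, mulVec_add_indicator_apply]
  by_cases hB : ∃ j, B k j ≠ 0
  · obtain ⟨j, hj⟩ := hB
    obtain ⟨u, hu⟩ := exists_mulVec_apply_eq_of_ne_zero hj (1 - (A *ᵥ v₀) k)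
    refine iff_of_true ⟨∅, Finset.notMem_empty k, u, ?_⟩ (Or.inl ⟨j, hj⟩)
    simp [hu]
  push Not at hB
  simp only [mulVec_apply_eq_zero_of_row_eq_zero hB, add_zero, exists_const, ne_eq, hB,
    not_true_eq_false, exists_false, false_or]
  obtain ⟨⟨S₀, hS₀, hS₀_sum⟩, hle⟩ := (Finset.univ.erase k).isGreatest_sum_subset (A k)
  constructor
  · rintro ⟨S, hkS, hpos⟩
    have hS : ∑ j ∈ S, A k j ≤ ∑ j ∈ Finset.univ.erase k, max (A k j) 0 :=
      hle ⟨S, Finset.subset_erase.2 ⟨Finset.subset_univ S, hkS⟩, rfl⟩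
    exact hpos.trans_le (by gcongr)
  · intro hpos
    exact ⟨S₀, (Finset.subset_erase.1 hS₀).2, by rwa [show ∑ j ∈ S₀, A k j = _ from hS₀_sum]⟩
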